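/- arXiv:2406.11725 — 3 statements merged into one kernel-verified Lean document; each statement's English description precedes it below -/
import Mathlib

section
/- Let β > 0 and let V, w : ℝ → ℝ be continuously differentiable and 2π-periodic. Suppose ρ : ℝ → ℝ is continuous, 2π-periodic, and is a Kirkwood–Monroe fixed point for (V, w, β). Then ρ is continuously differentiable, the flux vanishes identically: β^{−1} ρ′(x) + ρ(x)(V′(x) + (w′⋆ρ)(x)) = 0 for all x ∈ ℝ, and consequently ρ is a classical solution of the stationary McKean–Vlasov equation β^{−1} ρ″(x) + (d/dx)[ρ(x)(V′(x) + (w′⋆ρ)(x))] = 0 for all x ∈ ℝ. -/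
open Real MeasureTheory

/-- The periodic convolution `(w ⋆ ρ)(x) = ∫_0^{2π} w(x - y) ρ(y) dy`. -/
noncomputable def conv1 (w ρ : ℝ → ℝ) (x : ℝ) : ℝ :=
  ∫ y in (0:ℝ)..(2 * π), w (x - y) * ρ y

/-- `ρ` is a Kirkwood–Monroe fixed point for `(V, w, β)`:
`ρ(x) = Z⁻¹ exp(−β(V(x) + (w⋆ρ)(x)))` with `Z = ∫_0^{2π} exp(−β(V(y) + (w⋆ρ)(y))) dy`. -/
def IsKMFixedPoint (β : ℝ) (V w ρ : ℝ → ℝ) : Prop :=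
  ∀ x : ℝ, ρ x =
    (∫ y in (0:ℝ)..(2 * π), Real.exp (-β * (V y + conv1 w ρ y)))⁻¹ *
      Real.exp (-β * (V x + conv1 w ρ x))

lemma conv1_hasDerivAt (w ρ : ℝ → ℝ) (hw : ContDiff ℝ 1 w)
    (hwper : Function.Periodic w (2 * π)) (hρ : Continuous ρ) (hρper : Function.Periodic ρ (2 * π)) (x₀ : ℝ) :
    HasDerivAt (conv1 w ρ) (conv1 (deriv w) ρ x₀) x₀ := by
  have hdw : Continuous (deriv w) := hw.continuous_deriv le_rfl
  have hdwper : Function.Periodic (deriv w) (2 * π) := by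
    intro x
    have : deriv (fun y => w (y + 2 * π)) x = deriv w (x + 2 * π) := by
      simpa using deriv_comp_add_const w (2 * π) x
    rw [← this]
    congr 1
    funext y
    exact hwper y
  have two_pi_ne : (2 * π) ≠ 0 := by positivity
  obtain ⟨Cw, hCw⟩ := isBounded_iff_forall_norm_le.1
    (hdwper.isBounded_of_continuous two_pi_ne hdw)
  obtain ⟨Cρ, hCρ⟩ := isBounded_iff_forall_norm_le.1
    (hρper.isBounded_of_continuous two_pi_ne hρ)
  have key := intervalIntegral.hasDerivAt_integral_of_dominated_loc_of_deriv_le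
    (F := fun x y => w (x - y) * ρ y) (F' := fun x y => deriv w (x - y) * ρ y)
    (x₀ := x₀) (a := 0) (b := 2 * π) (μ := volume) (bound := fun _ => Cw * Cρ)
    (s := Set.univ) Filter.univ_mem
    (Filter.Eventually.of_forall fun x =>
      (((hw.continuous.comp (continuous_const.sub continuous_id)).mul hρ)).aestronglyMeasurable)
    (((hw.continuous.comp (continuous_const.sub continuous_id)).mul hρ).intervalIntegrable _ _)
    (((hdw.comp (continuous_const.sub continuous_id)).mul hρ)).aestronglyMeasurable
    (Filter.Eventually.of_forall fun t _ x _ => by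
      have h1 : ‖deriv w (x - t)‖ ≤ Cw := hCw _ ⟨x - t, rfl⟩
      have h2 : ‖ρ t‖ ≤ Cρ := hCρ _ ⟨t, rfl⟩
      calc ‖deriv w (x - t) * ρ t‖ = ‖deriv w (x - t)‖ * ‖ρ t‖ := norm_mul _ _
        _ ≤ Cw * Cρ := mul_le_mul h1 h2 (norm_nonneg _) ((norm_nonneg _).trans h1))
    (intervalIntegrable_const)
    (Filter.Eventually.of_forall fun t _ x _ => by
      have h1 : HasDerivAt (fun x => w (x - t)) (deriv w (x - t)) x := by
        exact ((hw.differentiable one_ne_zero (x - t)).hasDerivAt).comp_sub_const x t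
      exact h1.mul_const (ρ t))
  exact key.2

/-- A continuous `2π`-periodic Kirkwood–Monroe fixed point is `C¹`,
has identically vanishing flux `β⁻¹ρ′ + ρ(V′ + w′⋆ρ) = 0`, and is a classical solution of
the stationary McKean–Vlasov equation `β⁻¹ρ″ + (d/dx)[ρ(V′ + w′⋆ρ)] = 0`. -/
theorem stmt1 (β : ℝ) (hβ : 0 < β)
    (V w : ℝ → ℝ) (hV : ContDiff ℝ 1 V) (hVper : Function.Periodic V (2 * π))
    (hw : ContDiff ℝ 1 w) (hwper : Function.Periodic w (2 * π))
    (ρ : ℝ → ℝ) (hρ : Continuous ρ) (hρper : Function.Periodic ρ (2 * π))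
    (hKM : IsKMFixedPoint β V w ρ) :
    ContDiff ℝ 1 ρ ∧
    (∀ x : ℝ, β⁻¹ * deriv ρ x + ρ x * (deriv V x + conv1 (deriv w) ρ x) = 0) ∧
    (∀ x : ℝ, β⁻¹ * deriv (deriv ρ) x
        + deriv (fun y => ρ y * (deriv V y + conv1 (deriv w) ρ y)) x = 0) := by
  have hdw : Continuous (deriv w) := hw.continuous_deriv le_rfl
  set G := conv1 (deriv w) ρ with hG
  have hconv : ∀ x, HasDerivAt (conv1 w ρ) (G x) x := fun x =>
    conv1_hasDerivAt w ρ hw hwper hρ hρper x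
  have hGcont : Continuous G := by
    apply intervalIntegral.continuous_parametric_intervalIntegral_of_continuous'
      (f := fun x t => deriv w (x - t) * ρ t)
    exact ((hdw.comp (continuous_fst.sub continuous_snd)).mul (hρ.comp continuous_snd))
  have hconvC1 : ContDiff ℝ 1 (conv1 w ρ) := by
    rw [contDiff_one_iff_deriv]
    refine ⟨fun x => (hconv x).differentiableAt, ?_⟩
    have : deriv (conv1 w ρ) = G := funext fun x => (hconv x).deriv
    rw [this]; exact hGcont
  set Z : ℝ := ∫ y in (0:ℝ)..(2 * π), Real.exp (-β * (V y + conv1 w ρ y)) with hZ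
  have hρeq : ρ = fun x => Z⁻¹ * Real.exp (-β * (V x + conv1 w ρ x)) := funext hKM
  have hg : ContDiff ℝ 1 (fun x => -β * (V x + conv1 w ρ x)) :=
    contDiff_const.mul (hV.add hconvC1)
  have hρC1 : ContDiff ℝ 1 ρ := by
    rw [hρeq]
    exact contDiff_const.mul (Real.contDiff_exp.comp hg)
  have hρd : ∀ x, HasDerivAt ρ (ρ x * (-β * (deriv V x + G x))) x := by
    intro x
    have hVd : HasDerivAt V (deriv V x) x := (hV.differentiable one_ne_zero x).hasDerivAt
    have hgd : HasDerivAt (fun x => -β * (V x + conv1 w ρ x))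
        (-β * (deriv V x + G x)) x := ((hVd.add (hconv x)).const_mul (-β))
    have := ((hgd.exp).const_mul Z⁻¹)
    have h2 : HasDerivAt (fun x => Z⁻¹ * Real.exp (-β * (V x + conv1 w ρ x)))
        (Z⁻¹ * Real.exp (-β * (V x + conv1 w ρ x)) * (-β * (deriv V x + G x))) x := by
      rw [mul_assoc]; exact this
    rw [← hKM x] at h2
    rw [← hρeq] at h2
    exact h2
  have hflux : ∀ x : ℝ, β⁻¹ * deriv ρ x + ρ x * (deriv V x + G x) = 0 := by
    intro x
    rw [(hρd x).deriv]
    field_simp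
    ring
  refine ⟨hρC1, hflux, ?_⟩
  intro x
  have hd : deriv ρ = fun y => -β * (ρ y * (deriv V y + G y)) := by
    funext y
    have := hflux y
    have hβ' : β⁻¹ ≠ 0 := inv_ne_zero hβ.ne'
    field_simp at this ⊢
    linarith [this]
  rw [hd, deriv_const_mul_field]
  field_simp
  ring
end

section
/- Let β > 0 and let V, w : ℝ → ℝ be twice continuously differentiable and 2π-periodic. Suppose ρ : ℝ → ℝ is twice continuously differentiable, 2π-periodic, strictly positive, has ∫_0^{2π} ρ(x) dx = 1, and solves the stationary McKean–Vlasov equation β^{−1} ρ″(x) + (d/dx)[ρ(x)(V′(x) + (w′⋆ρ)(x))] = 0 for all x ∈ ℝ. Then ρ is a Kirkwood–Monroe fixed point for (V, w, β), i.e. ρ(x) = Z^{−1} exp(−β(V(x)+(w⋆ρ)(x))) for all x with Z := ∫_0^{2π} exp(−β(V(y)+(w⋆ρ)(y))) dy. -/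
open Real MeasureTheory

/-!
With `U := V + w ⋆ ρ`, the stationary equation says that the flux `β⁻¹ρ' + ρU'` is constant.
Since `β⁻¹ρ' + ρU' = β⁻¹ e^{-βU} (ρ e^{βU})'` and `ρ e^{βU}` is periodic, integrating over a
period forces the flux to vanish, so `ρ e^{βU}` is constant; the mass condition fixes the
constant as `Z⁻¹`. Differentiating `w ⋆ ρ` under the integral sign needs `w'` bounded, which
holds because it is continuous and periodic.
-/

namespace Function.Periodic

variable {f : ℝ → ℝ} {T : ℝ}

theorem deriv (hf : Periodic f T) : Periodic (_root_.deriv f) T := fun x => by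
  rw [← deriv_comp_add_const, show (fun y => f (y + T)) = f from funext hf]

theorem exists_abs_le_of_continuous (hf : Periodic f T) (hT : T ≠ 0) (hc : Continuous f) :
    ∃ M, ∀ x, |f x| ≤ M := by
  obtain ⟨M, hM⟩ := isBounded_iff_forall_norm_le.mp (hf.isBounded_of_continuous hT hc)
  exact ⟨M, fun x => hM _ ⟨x, rfl⟩⟩

end Function.Periodic

theorem periodic_conv1 {w : ℝ → ℝ} {T : ℝ} (hw : Function.Periodic w T) (ρ : ℝ → ℝ) :
    Function.Periodic (conv1 w ρ) T := fun x => by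
  refine intervalIntegral.integral_congr fun y _ => ?_
  simp only [add_sub_right_comm x T y, hw (x - y)]

theorem hasDerivAt_conv1 {g ρ : ℝ → ℝ} {T : ℝ} (hg : ContDiff ℝ 1 g)
    (hgper : Function.Periodic g T) (hT : T ≠ 0) (hρ : Continuous ρ) (x : ℝ) :
    HasDerivAt (conv1 g ρ) (conv1 (deriv g) ρ x) x := by
  have hg' : Continuous (deriv g) := hg.continuous_deriv le_rfl
  obtain ⟨M, hM⟩ := hgper.deriv.exists_abs_le_of_continuous hT hg'
  have hshift {h : ℝ → ℝ} (hh : Continuous h) (x' : ℝ) :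
      Continuous fun t => h (x' - t) * ρ t := by
    fun_prop
  refine (intervalIntegral.hasDerivAt_integral_of_dominated_loc_of_deriv_le
    (F := fun x' t => g (x' - t) * ρ t) (F' := fun x' t => deriv g (x' - t) * ρ t)
    (bound := fun t => M * |ρ t|) (Metric.ball_mem_nhds x one_pos)
    (.of_forall fun x' => (hshift hg.continuous x').aestronglyMeasurable)
    ((hshift hg.continuous x).intervalIntegrable _ _) (hshift hg' x).aestronglyMeasurable
    (.of_forall fun t _ x' _ => ?_) ((continuous_const.mul hρ.abs).intervalIntegrable _ _)
    (.of_forall fun t _ x' _ => ?_)).2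
  · rw [Real.norm_eq_abs, abs_mul]
    exact mul_le_mul_of_nonneg_right (hM _) (abs_nonneg _)
  · have hgd := (hg.differentiable one_ne_zero (x' - t)).hasDerivAt
    simpa using (hgd.comp x' ((hasDerivAt_id x').sub_const t)).mul_const (ρ t)
section Stationary

variable {β T c : ℝ} {ρ U U' : ℝ → ℝ}

theorem exists_flux_eq_of_stationary (hρ : ContDiff ℝ 2 ρ) (hU' : Differentiable ℝ U')
    (hstat : ∀ x, β⁻¹ * deriv (deriv ρ) x + deriv (fun y => ρ y * U' y) x = 0) :
    ∃ c, ∀ x, β⁻¹ * deriv ρ x + ρ x * U' x = c := by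
  have hρ' : Differentiable ℝ (deriv ρ) := (hρ.deriv' (n := 1)).differentiable one_ne_zero
  have hρU' : Differentiable ℝ (fun y => ρ y * U' y) :=
    (hρ.differentiable two_ne_zero).mul hU'
  have hflux (x : ℝ) : HasDerivAt (fun x => β⁻¹ * deriv ρ x + ρ x * U' x) 0 x := by
    simpa only [hstat x] using ((hρ' x).hasDerivAt.const_mul β⁻¹).fun_add (hρU' x).hasDerivAt
  exact ⟨_, fun x => is_const_of_deriv_eq_zero (fun x => (hflux x).differentiableAt)
    (fun x => (hflux x).deriv) x 0⟩

theorem hasDerivAt_mul_exp_mul (hβ : β ≠ 0) (hρ : Differentiable ℝ ρ)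
    (hU : ∀ x, HasDerivAt U (U' x) x) (x : ℝ) :
    HasDerivAt (fun y => ρ y * exp (β * U y))
      (β * (β⁻¹ * deriv ρ x + ρ x * U' x) * exp (β * U x)) x := by
  refine ((hρ x).hasDerivAt.fun_mul ((hU x).const_mul β).exp).congr_deriv ?_
  linear_combination -deriv ρ x * exp (β * U x) * mul_inv_cancel₀ hβ

theorem flux_eq_zero_of_periodic (hT : 0 < T) (hβ : β ≠ 0) (hρ : Differentiable ℝ ρ)
    (hρper : Function.Periodic ρ T) (hU : ∀ x, HasDerivAt U (U' x) x)
    (hUper : Function.Periodic U T) (hflux : ∀ x, β⁻¹ * deriv ρ x + ρ x * U' x = c) :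
    c = 0 := by
  have hUc : Continuous U := continuous_iff_continuousAt.mpr fun x => (hU x).continuousAt
  have hexp : Continuous fun x => exp (β * U x) := by fun_prop
  have hderiv (x : ℝ) : HasDerivAt (fun y => ρ y * exp (β * U y)) (β * c * exp (β * U x)) x :=
    hflux x ▸ hasDerivAt_mul_exp_mul hβ hρ hU x
  have hperiod : ∫ x in (0:ℝ)..T, β * c * exp (β * U x) = 0 := by
    rw [intervalIntegral.integral_eq_sub_of_hasDerivAt (fun x _ => hderiv x)
      ((continuous_const.mul hexp).intervalIntegrable _ _)]
    rw [← zero_add T, hρper 0, hUper 0, sub_self]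
  have hZ : 0 < ∫ x in (0:ℝ)..T, exp (β * U x) :=
    intervalIntegral.intervalIntegral_pos_of_pos (hexp.intervalIntegrable _ _)
      (fun x => exp_pos _) hT
  rw [intervalIntegral.integral_const_mul] at hperiod
  simpa [hβ, hZ.ne'] using hperiod

theorem exists_eq_mul_exp_of_stationary (hT : 0 < T) (hβ : β ≠ 0) (hρ : ContDiff ℝ 2 ρ)
    (hρper : Function.Periodic ρ T) (hU : ∀ x, HasDerivAt U (U' x) x)
    (hUper : Function.Periodic U T) (hU' : Differentiable ℝ U')
    (hstat : ∀ x, β⁻¹ * deriv (deriv ρ) x + deriv (fun y => ρ y * U' y) x = 0) :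
    ∃ C, ∀ x, ρ x = C * exp (-β * U x) := by
  have hρd : Differentiable ℝ ρ := hρ.differentiable two_ne_zero
  obtain ⟨c, hflux⟩ := exists_flux_eq_of_stationary hρ hU' hstat
  have hc := flux_eq_zero_of_periodic hT hβ hρd hρper hU hUper hflux
  have hconst : ∀ x, HasDerivAt (fun y => ρ y * exp (β * U y)) 0 x := fun x => by
    simpa [hflux x, hc] using hasDerivAt_mul_exp_mul hβ hρd hU x
  refine ⟨ρ 0 * exp (β * U 0), fun x => ?_⟩
  rw [← is_const_of_deriv_eq_zero (fun y => (hconst y).differentiableAt)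
    (fun y => (hconst y).deriv) x 0, mul_assoc, ← exp_add]
  simp

end Stationary

theorem eq_inv_integral_mul_of_eq_const_mul {ρ f : ℝ → ℝ} {a b C : ℝ}
    (hρ : ∀ x, ρ x = C * f x) (hmass : ∫ x in a..b, ρ x = 1) (x : ℝ) :
    ρ x = (∫ y in a..b, f y)⁻¹ * f x := by
  simp only [hρ, intervalIntegral.integral_const_mul] at hmass ⊢
  rw [eq_inv_of_mul_eq_one_left hmass]

theorem stmt2_general (β : ℝ) (hβ : 0 < β)
    (V w : ℝ → ℝ) (hV : ContDiff ℝ 2 V) (hVper : Function.Periodic V (2 * π))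
    (hw : ContDiff ℝ 2 w) (hwper : Function.Periodic w (2 * π))
    (ρ : ℝ → ℝ) (hρ : ContDiff ℝ 2 ρ) (hρper : Function.Periodic ρ (2 * π))
    (hmass : (∫ x in (0:ℝ)..(2 * π), ρ x) = 1)
    (hPDE : ∀ x : ℝ, β⁻¹ * deriv (deriv ρ) x
        + deriv (fun y => ρ y * (deriv V y + conv1 (deriv w) ρ y)) x = 0) :
    IsKMFixedPoint β V w ρ := by
  have hπ : (0:ℝ) < 2 * π := by positivity
  have hρc : Continuous ρ := hρ.continuous
  have hV' : ContDiff ℝ 1 (deriv V) := hV.deriv'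
  have hw' : ContDiff ℝ 1 (deriv w) := hw.deriv'
  have hU : ∀ x, HasDerivAt (fun y => V y + conv1 w ρ y)
      (deriv V x + conv1 (deriv w) ρ x) x := fun x =>
    (hV.differentiable two_ne_zero x).hasDerivAt.add
      (hasDerivAt_conv1 (hw.of_le one_le_two) hwper hπ.ne' hρc x)
  have hU' : Differentiable ℝ fun x => deriv V x + conv1 (deriv w) ρ x := fun x =>
    ((hV'.differentiable one_ne_zero x).hasDerivAt.add
      (hasDerivAt_conv1 hw' hwper.deriv hπ.ne' hρc x)).differentiableAt
  obtain ⟨C, hC⟩ := exists_eq_mul_exp_of_stationary hπ hβ.ne' hρ hρper hU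
    (hVper.add (periodic_conv1 hwper ρ)) hU' hPDE
  exact eq_inv_integral_mul_of_eq_const_mul hC hmass

/-- A strictly positive, `C²`, `2π`-periodic probability density solving the
stationary McKean–Vlasov equation `β⁻¹ρ″ + (d/dx)[ρ(V′ + w′⋆ρ)] = 0` is a
Kirkwood–Monroe fixed point. -/
theorem stmt2 (β : ℝ) (hβ : 0 < β)
    (V w : ℝ → ℝ) (hV : ContDiff ℝ 2 V) (hVper : Function.Periodic V (2 * π))
    (hw : ContDiff ℝ 2 w) (hwper : Function.Periodic w (2 * π))
    (ρ : ℝ → ℝ) (hρ : ContDiff ℝ 2 ρ) (hρper : Function.Periodic ρ (2 * π))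
    (hρpos : ∀ x, 0 < ρ x)
    (hmass : (∫ x in (0:ℝ)..(2 * π), ρ x) = 1)
    (hPDE : ∀ x : ℝ, β⁻¹ * deriv (deriv ρ) x
        + deriv (fun y => ρ y * (deriv V y + conv1 (deriv w) ρ y)) x = 0) :
    IsKMFixedPoint β V w ρ :=
  stmt2_general β hβ V w hV hVper hw hwper ρ hρ hρper hmass hPDE
end

section
/- Let n ≥ 1, let F : ℝⁿ → ℝⁿ be differentiable at a point r with F(r) = 0 and with invertible Fréchet derivative DF(r), and let p ≥ 1 and ξ ≥ 0. Then there exist c > 0 and δ > 0 such that for all a ∈ ℝⁿ with 0 < ‖a − r‖ < δ, the deflated residual satisfies ‖F(a)‖ · (‖a − r‖^{−p} + ξ) ≥ c. In particular, the norm of the deflated residual G(a) := F(a)(‖a − r‖^{−p} + ξ) does not tend to zero as a → r, so Newton's method applied to G cannot reconverge to the known root r. -/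
/-!
Invertibility of `DF(r)` gives `‖a - r‖ ≤ C ‖F a‖` near `r`. For `‖a - r‖ ≤ 1` and `p ≥ 1` the
deflation factor satisfies `‖a - r‖ (‖a - r‖⁻ᵖ + ξ) ≥ 1`, so the deflated residual is at least `1 / C`.
-/

open Real Topology Asymptotics

lemma one_le_mul_rpow_neg_add {t p ξ : ℝ} (ht₀ : 0 < t) (ht₁ : t ≤ 1) (hp : 1 ≤ p)
    (hξ : 0 ≤ ξ) : 1 ≤ t * (t ^ (-p) + ξ) := by
  have h : t * t ^ (-p) = t ^ (1 - p) := by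
    rw [sub_eq_add_neg, rpow_add ht₀, rpow_one]
  calc (1 : ℝ) ≤ t ^ (1 - p) := one_le_rpow_of_pos_of_le_one_of_nonpos ht₀ ht₁ (by linarith)
    _ ≤ t * (t ^ (-p) + ξ) := by rw [mul_add, h]; nlinarith

theorem exists_pos_le_norm_mul_deflation {E G : Type*} [SeminormedAddCommGroup E]
    [SeminormedAddCommGroup G] {f : E → G} {r : E} (hf : (· - r) =O[𝓝 r] f)
    {p ξ : ℝ} (hp : 1 ≤ p) (hξ : 0 ≤ ξ) :
    ∃ c > 0, ∃ δ > 0, ∀ a : E,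
      0 < ‖a - r‖ → ‖a - r‖ < δ → c ≤ ‖f a‖ * (‖a - r‖ ^ (-p) + ξ) := by
  obtain ⟨C, hC, hCf⟩ := hf.exists_pos
  obtain ⟨δ, hδ, hball⟩ := Metric.eventually_nhds_iff.mp hCf.bound
  refine ⟨C⁻¹, inv_pos.mpr hC, min δ 1, lt_min hδ one_pos, fun a ha haδ => ?_⟩
  have hlower : ‖a - r‖ ≤ C * ‖f a‖ :=
    hball (by rw [dist_eq_norm]; exact haδ.trans_le (min_le_left _ _))
  have hfactor := one_le_mul_rpow_neg_add ha (haδ.trans_le (min_le_right _ _)).le hp hξ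
  have hpos : 0 ≤ ‖a - r‖ ^ (-p) + ξ := by positivity
  rw [inv_le_iff_one_le_mul₀' hC]
  calc (1 : ℝ) ≤ ‖a - r‖ * (‖a - r‖ ^ (-p) + ξ) := hfactor
    _ ≤ C * ‖f a‖ * (‖a - r‖ ^ (-p) + ξ) := mul_le_mul_of_nonneg_right hlower hpos
    _ = C * (‖f a‖ * (‖a - r‖ ^ (-p) + ξ)) := mul_assoc _ _ _

theorem stmt14_general (n : ℕ)
    (F : EuclideanSpace ℝ (Fin n) → EuclideanSpace ℝ (Fin n))
    (r : EuclideanSpace ℝ (Fin n))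
    (F' : EuclideanSpace ℝ (Fin n) →L[ℝ] EuclideanSpace ℝ (Fin n))
    (hF : HasFDerivAt F F' r) (hFr : F r = 0)
    (hinv : Function.Bijective F')
    (p ξ : ℝ) (hp : 1 ≤ p) (hξ : 0 ≤ ξ) :
    ∃ c > 0, ∃ δ > 0, ∀ a : EuclideanSpace ℝ (Fin n),
      0 < ‖a - r‖ → ‖a - r‖ < δ → c ≤ ‖F a‖ * (‖a - r‖ ^ (-p) + ξ) := by
  have hF'_inducing : IsInducing F' :=
    (LinearMap.isClosedEmbedding_of_injective (f := F'.toLinearMap)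
      (LinearMap.ker_eq_bot.mpr hinv.injective)).isInducing
  have hbigO : (· - r) =O[𝓝 r] F := by
    simpa only [hFr, sub_zero] using (hF.isTheta_sub hF'_inducing).isBigO_symm
  exact exists_pos_le_norm_mul_deflation hbigO hp hξ

/-- (Deflation bounds the deflated residual away from zero near a known
nondegenerate root.) If `F : ℝⁿ → ℝⁿ` is differentiable at `r` with `F(r) = 0` and
invertible Fréchet derivative, then for the deflation power `p ≥ 1` and shift `ξ ≥ 0`
there are `c > 0` and `δ > 0` with `‖F(a)‖(‖a−r‖^{−p} + ξ) ≥ c` whenever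
`0 < ‖a − r‖ < δ`; hence Newton's method applied to the deflated residual
`G(a) = F(a)(‖a−r‖^{−p} + ξ)` cannot reconverge to `r`. -/
theorem stmt14 (n : ℕ) (hn : 1 ≤ n)
    (F : EuclideanSpace ℝ (Fin n) → EuclideanSpace ℝ (Fin n))
    (r : EuclideanSpace ℝ (Fin n))
    (F' : EuclideanSpace ℝ (Fin n) →L[ℝ] EuclideanSpace ℝ (Fin n))
    (hF : HasFDerivAt F F' r) (hFr : F r = 0)
    (hinv : Function.Bijective F')
    (p ξ : ℝ) (hp : 1 ≤ p) (hξ : 0 ≤ ξ) :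
    ∃ c > 0, ∃ δ > 0, ∀ a : EuclideanSpace ℝ (Fin n),
      0 < ‖a - r‖ → ‖a - r‖ < δ → c ≤ ‖F a‖ * (‖a - r‖ ^ (-p) + ξ) :=
  stmt14_general n F r F' hF hFr hinv p ξ hp hξ
end
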